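/- Let 𝒯 be a monoid of transformations of a nonempty set X. There exists a 𝒯-invariant coherent prevision on X, i.e. a coherent prevision P with P(f∘T) = P(f) for every gamble f and every T ∈ 𝒯, if and only if for every n ≥ 0, all gambles f₁,…,f_n on X and all T₁,…,T_n ∈ 𝒯 one has sup_{x∈X} Σ_{k=1}^n [ f_k(x) − f_k(T_k x) ] ≥ 0. -/

import Mathlib

def IsGamble {X : Type*} (f : X → ℝ) : Prop :=
  BddAbove (Set.range f) ∧ BddBelow (Set.range f)

def IsCoherentLowerPrevision {X : Type*} (L : (X → ℝ) → ℝ) : Prop :=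
  (∀ f : X → ℝ, IsGamble f → sInf (Set.range f) ≤ L f) ∧
  (∀ f g : X → ℝ, IsGamble f → IsGamble g → L f + L g ≤ L (f + g)) ∧
  (∀ f : X → ℝ, IsGamble f → ∀ c : ℝ, 0 ≤ c → L (c • f) = c * L f)

def IsCoherentPrevision {X : Type*} (P : (X → ℝ) → ℝ) : Prop :=
  (∀ f g : X → ℝ, IsGamble f → IsGamble g → P (f + g) = P f + P g) ∧
  (∀ f : X → ℝ, IsGamble f → sInf (Set.range f) ≤ P f)

def IsTransformationMonoid {X : Type*} (𝒯 : Set (X → X)) : Prop :=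
  id ∈ 𝒯 ∧ ∀ S ∈ 𝒯, ∀ T ∈ 𝒯, S ∘ T ∈ 𝒯

def Dominating {X : Type*} (L : (X → ℝ) → ℝ) : Set ((X → ℝ) → ℝ) :=
  {P | IsCoherentPrevision P ∧ ∀ f : X → ℝ, IsGamble f → L f ≤ P f}

/-! The elements of the linear span `D` of the differences `f - f ∘ T` are exactly the sums
`∑ k, (f_k - f_k ∘ T_k)` of the condition, and a coherent prevision `P` is invariant iff it
vanishes on `D`. Since `P g ≤ sup g`, an invariant `P` forces `0 ≤ sup g` on `D`. Conversely,
under that condition the zero functional on `D` is dominated by the sublinear functional `sup`,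
and a Hahn–Banach extension `P ≤ sup` to all gambles is a coherent prevision, since
`inf f = -sup (-f) ≤ -P (-f) = P f`, that still vanishes on `D`. -/

open Set

lemma Real.iInf_neg {ι : Sort*} (f : ι → ℝ) : ⨅ i, -f i = -⨆ i, f i := by
  rw [iInf, Real.sInf_def, iSup]
  congr 2
  ext
  simp [neg_eq_iff_eq_neg]

lemma Real.iSup_neg {ι : Sort*} (f : ι → ℝ) : ⨆ i, -f i = -⨅ i, f i := by
  rw [iInf, Real.sInf_def, iSup, neg_neg]
  congr 1
  ext
  simp [neg_eq_iff_eq_neg]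

lemma Real.iSup_add_le {ι : Sort*} {f g : ι → ℝ} (hf : BddAbove (range f))
    (hg : BddAbove (range g)) : ⨆ i, (f i + g i) ≤ (⨆ i, f i) + ⨆ i, g i := by
  cases isEmpty_or_nonempty ι
  · simp
  · exact ciSup_le fun i => add_le_add (le_ciSup hf i) (le_ciSup hg i)

section

variable {X : Type*}

lemma isGamble_iff_exists_abs_le {f : X → ℝ} : IsGamble f ↔ ∃ C, ∀ x, |f x| ≤ C := by
  rw [IsGamble, and_comm, ← isBounded_iff_bddBelow_bddAbove, isBounded_iff_forall_norm_le]
  simp [Real.norm_eq_abs]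

lemma IsGamble.comp {f : X → ℝ} (hf : IsGamble f) (T : X → X) : IsGamble (f ∘ T) :=
  ⟨hf.1.mono (range_comp_subset_range T f), hf.2.mono (range_comp_subset_range T f)⟩

variable (X) in
def gambles : Submodule ℝ (X → ℝ) where
  carrier := {f | IsGamble f}
  add_mem' {f g} hf hg := by
    obtain ⟨C, hC⟩ := isGamble_iff_exists_abs_le.1 hf
    obtain ⟨D, hD⟩ := isGamble_iff_exists_abs_le.1 hg
    exact isGamble_iff_exists_abs_le.2
      ⟨C + D, fun x => (abs_add_le _ _).trans (add_le_add (hC x) (hD x))⟩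
  zero_mem' := isGamble_iff_exists_abs_le.2 ⟨0, by simp⟩
  smul_mem' c f hf := by
    obtain ⟨C, hC⟩ := isGamble_iff_exists_abs_le.1 hf
    exact isGamble_iff_exists_abs_le.2 ⟨|c| * C, fun x => by
      simpa [abs_mul] using mul_le_mul_of_nonneg_left (hC x) (abs_nonneg c)⟩

namespace IsCoherentPrevision

variable {P : (X → ℝ) → ℝ}

def toAddMonoidHom (hP : IsCoherentPrevision P) : gambles X →+ ℝ :=
  AddMonoidHom.mk' (fun f => P f) fun f g => hP.1 f g f.2 g.2

lemma le_iSup (hP : IsCoherentPrevision P) {f : X → ℝ} (hf : IsGamble f) :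
    P f ≤ ⨆ x, f x := by
  have hneg : P (-f) = -P f := map_neg hP.toAddMonoidHom ⟨f, hf⟩
  have hinf : ⨅ x, -f x ≤ P (-f) := hP.2 (-f) ((gambles X).neg_mem hf)
  rw [Real.iInf_neg, hneg] at hinf
  linarith

lemma iSup_sum_sub_comp_nonneg_of_invariant (hP : IsCoherentPrevision P)
    {𝒯 : Set (X → X)} (hinv : ∀ f : X → ℝ, IsGamble f → ∀ T ∈ 𝒯, P (f ∘ T) = P f)
    {n : ℕ} (fs : Fin n → X → ℝ) (Ts : Fin n → X → X) (hfs : ∀ k, IsGamble (fs k))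
    (hTs : ∀ k, Ts k ∈ 𝒯) :
    0 ≤ ⨆ x, ∑ k, (fs k x - fs k (Ts k x)) := by
  let g : gambles X := ∑ k, (⟨fs k, hfs k⟩ - ⟨fs k ∘ Ts k, (hfs k).comp (Ts k)⟩)
  have hPg : hP.toAddMonoidHom g = 0 := by
    simp [g, map_sum, map_sub, IsCoherentPrevision.toAddMonoidHom, hinv _ (hfs _) _ (hTs _)]
  have hg : (g : X → ℝ) = fun x => ∑ k, (fs k x - fs k (Ts k x)) := by
    ext x; simp [g, Finset.sum_apply]
  rw [← hg, ← hPg]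
  exact hP.le_iSup g.2

end IsCoherentPrevision

theorem exists_isCoherentPrevision_of_iSup_nonneg (D : Submodule ℝ (X → ℝ))
    (hD : D ≤ gambles X) (h : ∀ g ∈ D, 0 ≤ ⨆ x, g x) :
    ∃ P : (X → ℝ) → ℝ, IsCoherentPrevision P ∧ ∀ g ∈ D, P g = 0 := by
  let N : gambles X → ℝ := fun f => ⨆ x, (f : X → ℝ) x
  have N_hom : ∀ c : ℝ, 0 < c → ∀ f, N (c • f) = c * N f := fun c hc f =>
    (Real.mul_iSup_of_nonneg hc.le _).symm
  have N_add : ∀ f g, N (f + g) ≤ N f + N g := fun f g =>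
    Real.iSup_add_le f.2.1 g.2.1
  obtain ⟨L, hL0, hLN⟩ := exists_extension_of_le_sublinear
    ⟨D.comap (gambles X).subtype, 0⟩ N N_hom N_add fun g => h _ g.2
  obtain ⟨P, hP⟩ := LinearMap.exists_extend L
  have hPL : ∀ f (hf : IsGamble f), P f = L ⟨f, hf⟩ := fun f hf =>
    LinearMap.congr_fun hP ⟨f, hf⟩
  refine ⟨P, ⟨fun f g _ _ => map_add P f g, fun f hf => ?_⟩, fun g hg => ?_⟩
  · have := hLN (-⟨f, hf⟩)
    simp only [map_neg, N, Submodule.coe_neg, Pi.neg_apply, Real.iSup_neg] at this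
    rw [hPL f hf]
    exact neg_le_neg_iff.1 this
  · rw [hPL g (hD hg)]
    exact hL0 ⟨⟨g, hD hg⟩, hg⟩

def invarianceDefects (𝒯 : Set (X → X)) : Submodule ℝ (X → ℝ) :=
  Submodule.span ℝ {g | ∃ f T, IsGamble f ∧ T ∈ 𝒯 ∧ f - f ∘ T = g}

lemma invarianceDefects_le_gambles (𝒯 : Set (X → X)) : invarianceDefects 𝒯 ≤ gambles X :=
  Submodule.span_le.2 <| by
    rintro _ ⟨f, T, hf, -, rfl⟩
    exact (gambles X).sub_mem hf (hf.comp T)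

lemma exists_sum_sub_comp_of_mem_invarianceDefects {𝒯 : Set (X → X)} {g : X → ℝ}
    (hg : g ∈ invarianceDefects 𝒯) :
    ∃ (n : ℕ) (fs : Fin n → X → ℝ) (Ts : Fin n → X → X), (∀ k, IsGamble (fs k)) ∧
      (∀ k, Ts k ∈ 𝒯) ∧ g = fun x => ∑ k, (fs k x - fs k (Ts k x)) := by
  obtain ⟨n, c, d, rfl⟩ := Submodule.mem_span_set'.1 hg
  choose f T hf hT hd using fun k => (d k).2
  refine ⟨n, fun k => c k • f k, T, fun k => (gambles X).smul_mem (c k) (hf k), hT, ?_⟩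
  ext x
  simp [← hd, Finset.sum_apply, mul_sub]

end

theorem stmt8_general (X : Type*) (𝒯 : Set (X → X)) :
    (∃ P : (X → ℝ) → ℝ, IsCoherentPrevision P ∧
        ∀ f : X → ℝ, IsGamble f → ∀ T ∈ 𝒯, P (f ∘ T) = P f) ↔
    (∀ (n : ℕ) (fs : Fin n → X → ℝ) (Ts : Fin n → X → X),
        (∀ k, IsGamble (fs k)) → (∀ k, Ts k ∈ 𝒯) →
        0 ≤ ⨆ x : X, ∑ k, (fs k x - fs k (Ts k x))) := by
  refine ⟨fun ⟨P, hP, hinv⟩ n fs Ts hfs hTs =>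
    hP.iSup_sum_sub_comp_nonneg_of_invariant hinv fs Ts hfs hTs, fun h => ?_⟩
  obtain ⟨P, hP, hPD⟩ := exists_isCoherentPrevision_of_iSup_nonneg (invarianceDefects 𝒯)
    (invarianceDefects_le_gambles 𝒯) fun g hg => by
      obtain ⟨n, fs, Ts, hfs, hTs, rfl⟩ := exists_sum_sub_comp_of_mem_invarianceDefects hg
      exact h n fs Ts hfs hTs
  refine ⟨P, hP, fun f hf T hT => ?_⟩
  have hdefect : P (f - f ∘ T) = 0 :=
    hPD _ (Submodule.subset_span ⟨f, T, hf, hT, rfl⟩)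
  have hsplit := hP.1 (f ∘ T) (f - f ∘ T) (hf.comp T) ((gambles X).sub_mem hf (hf.comp T))
  rw [add_sub_cancel, hdefect, add_zero] at hsplit
  exact hsplit.symm

theorem stmt8 (X : Type*) [Nonempty X] (𝒯 : Set (X → X))
    (h𝒯 : IsTransformationMonoid 𝒯) :
    (∃ P : (X → ℝ) → ℝ, IsCoherentPrevision P ∧
        ∀ f : X → ℝ, IsGamble f → ∀ T ∈ 𝒯, P (f ∘ T) = P f) ↔
    (∀ (n : ℕ) (fs : Fin n → X → ℝ) (Ts : Fin n → X → X),
        (∀ k, IsGamble (fs k)) → (∀ k, Ts k ∈ 𝒯) →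
        0 ≤ ⨆ x : X, ∑ k, (fs k x - fs k (Ts k x))) :=
  stmt8_general X 𝒯
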